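/- Let M be a vertex of B_d^ι and Γ its bipartite cycle graph. Every cycle of Γ of length at least 4 contains exactly two fixed points of ι, and these two fixed points either lie one on each side (and then the cycle length is ≡ 2 mod 4) or both on the same side (and then the cycle length is ≡ 0 mod 4). -/

import Mathlib

section Aux
variable {d n : ℕ}

abbrev EdgeP (z : ZMod n → Fin d ⊕ Fin d) (k : ZMod n) (i j : Fin d) : Prop :=
  (z k = .inl i ∧ z (k+1) = .inr j) ∨ (z k = .inr j ∧ z (k+1) = .inl i)

noncomputable def sgnZ (n : ℕ) (k : ZMod n) : ℝ := if k.val % 2 = 0 then 1 else -1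

noncomputable def Emat [NeZero n] (z : ZMod n → Fin d ⊕ Fin d) : Matrix (Fin d) (Fin d) ℝ :=
  fun i j => ∑ k : ZMod n, if EdgeP z k i j then sgnZ n k else 0

lemma constIter {n : ℕ} [NeZero n] {α : Sort*} (g : ZMod n → α) (h : ∀ k, g (k+1) = g k)
    (k : ZMod n) : g k = g 0 := by
  have key : ∀ m : ℕ, g (m : ZMod n) = g 0 := by
    intro m
    induction m with
    | zero => simp
    | succ m ih =>
      have h1 : ((m+1:ℕ) : ZMod n) = (m : ZMod n) + 1 := by push_cast; ring
      rw [h1, h, ih]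
  conv_lhs => rw [← ZMod.natCast_zmod_val k]
  exact key k.val

lemma flipIter {n : ℕ} [NeZero n] (g : ZMod n → Bool) (h : ∀ k, g (k+1) = !g k)
    (k : ZMod n) (m : ℕ) : g (k + (m : ZMod n)) = xor (decide (m % 2 = 1)) (g k) := by
  induction m with
  | zero => simp
  | succ m ih =>
    have h1 : ((m+1:ℕ) : ZMod n) = (m : ZMod n) + 1 := by push_cast; ring
    rw [h1, ← add_assoc, h, ih]
    rcases Nat.mod_two_eq_zero_or_one m with hm | hm <;>
      simp [Nat.add_mod, hm, Bool.xor_comm]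

lemma boolAux : ∀ p q s t : Bool, xor p s = xor q t → (p = q ↔ s = t) := by decide

end Aux


/-- The `ι`-invariant Birkhoff polytope for the involution `(ιM)_{ij} = M_{φ(i)ψ(j)}`. -/
def invBirkhoff (d : ℕ) (φ ψ : Equiv.Perm (Fin d)) : Set (Matrix (Fin d) (Fin d) ℝ) :=
  {M | M ∈ doublyStochastic ℝ (Fin d) ∧ (fun i j => M (φ i) (ψ j)) = M}

/-- The adjacency function of the bipartite multigraph `Γ` with adjacency matrix `2M`. -/
def graphAdj {d : ℕ} (M : Matrix (Fin d) (Fin d) ℝ) :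
    (Fin d ⊕ Fin d) → (Fin d ⊕ Fin d) → ℝ
  | Sum.inl i, Sum.inr j => 2 * M i j
  | Sum.inr j, Sum.inl i => 2 * M i j
  | _, _ => 0

/-- Every cycle of `Γ` of length at least `4` contains exactly two fixed points of the
involution `ι = Sum.map φ ψ`; if they lie on the same side, the length is `≡ 0 mod 4`,
and if they lie on opposite sides, the length is `≡ 2 mod 4`. -/
theorem stmt_14 (d : ℕ) (φ ψ : Equiv.Perm (Fin d)) (hφ : φ * φ = 1) (hψ : ψ * ψ = 1)
    (M : Matrix (Fin d) (Fin d) ℝ)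
    (hM : M ∈ Set.extremePoints ℝ (invBirkhoff d φ ψ))
    (n : ℕ) (hn : 4 ≤ n) (z : ZMod n → Fin d ⊕ Fin d)
    (hz : Function.Injective z)
    (hadj : ∀ k, 1 ≤ graphAdj M (z k) (z (k + 1))) :
    ∃ k₁ k₂ : ZMod n, k₁ ≠ k₂ ∧
      Sum.map φ ψ (z k₁) = z k₁ ∧ Sum.map φ ψ (z k₂) = z k₂ ∧
      (∀ k, Sum.map φ ψ (z k) = z k → k = k₁ ∨ k = k₂) ∧
      ((z k₁).isLeft = (z k₂).isLeft → n % 4 = 0) ∧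
      ((z k₁).isLeft ≠ (z k₂).isLeft → n % 4 = 2) := by
  haveI : NeZero n := ⟨by omega⟩
  haveI : Fact (1 < n) := ⟨by omega⟩
  have hφ2 : ∀ i, φ (φ i) = i := fun i => by
    simpa [Equiv.Perm.mul_apply] using DFunLike.congr_fun hφ i
  have hψ2 : ∀ j, ψ (ψ j) = j := fun j => by
    simpa [Equiv.Perm.mul_apply] using DFunLike.congr_fun hψ j
  obtain ⟨⟨hDS, hInvF⟩, hExt⟩ := hM
  have hInv : ∀ i j, M (φ i) (ψ j) = M i j := fun i j => congrFun (congrFun hInvF i) j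
  rw [mem_doublyStochastic_iff_sum] at hDS
  obtain ⟨hnn, hrow, hcol⟩ := hDS
  have h2ne : (2 : ZMod n) ≠ 0 := by
    intro h
    have : ((2:ℕ) : ZMod n) = 0 := by exact_mod_cast h
    rw [ZMod.natCast_eq_zero_iff] at this
    have := Nat.le_of_dvd (by norm_num) this
    omega
  have hcases : ∀ u : Fin d ⊕ Fin d, (∃ i0, u = Sum.inl i0) ∨ (∃ j0, u = Sum.inr j0) := by
    intro u; rcases u with a | b
    · exact Or.inl ⟨a, rfl⟩
    · exact Or.inr ⟨b, rfl⟩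
  have hflip : ∀ k, (z (k+1)).isLeft = !(z k).isLeft := by
    intro k
    have h := hadj k
    rcases hk : z k with i | j <;> rcases hk1 : z (k+1) with i' | j' <;>
      rw [hk, hk1] at h <;> simp [graphAdj] at h ⊢ <;> norm_num at h
  have hn2 : n % 2 = 0 := by
    have h := flipIter (fun k => (z k).isLeft) hflip 0 n
    rw [ZMod.natCast_self, add_zero] at h
    rcases Nat.mod_two_eq_zero_or_one n with h2 | h2
    · exact h2
    · rw [h2] at h; simp at h; revert h; cases z 0 <;> simp
  have h2dvd : 2 ∣ n := Nat.dvd_of_mod_eq_zero hn2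
  set parB : ZMod n → Bool := fun k => decide (k.val % 2 = 1) with hparB
  have hvalsucc : ∀ k : ZMod n, (k+1).val % 2 = (k.val + 1) % 2 := by
    intro k
    rw [ZMod.val_add, ZMod.val_one, Nat.mod_mod_of_dvd _ h2dvd]
  have hparstep : ∀ k, parB (k+1) = !parB k := by
    intro k
    simp only [hparB]
    rw [hvalsucc]
    rcases Nat.mod_two_eq_zero_or_one k.val with h2 | h2 <;> simp [Nat.add_mod, h2]
  have hsgnstep : ∀ k, sgnZ n (k+1) = -sgnZ n k := by
    intro k
    simp only [sgnZ]
    rw [hvalsucc]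
    rcases Nat.mod_two_eq_zero_or_one k.val with h2 | h2 <;> simp [Nat.add_mod, h2]
  have hsgnpar : ∀ a b : ZMod n, sgnZ n a = sgnZ n b ↔ parB a = parB b := by
    intro a b
    simp only [sgnZ, hparB]
    rcases Nat.mod_two_eq_zero_or_one a.val with h2 | h2 <;>
      rcases Nat.mod_two_eq_zero_or_one b.val with h3 | h3 <;> simp [h2, h3] <;> norm_num
  have hsgnne : ∀ a : ZMod n, sgnZ n a ≠ 0 := by
    intro a
    simp only [sgnZ]
    split <;> norm_num
  -- edge basics
  have hEdgeEx : ∀ k, ∃ i j, EdgeP z k i j := by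
    intro k
    have h := hflip k
    rcases hk : z k with i | j <;> rcases hk1 : z (k+1) with i' | j'
    · rw [hk, hk1] at h; simp at h
    · exact ⟨i, j', Or.inl ⟨hk, hk1⟩⟩
    · exact ⟨i', j, Or.inr ⟨hk, hk1⟩⟩
    · rw [hk, hk1] at h; simp at h
  have hEdgeHalf : ∀ k i j, EdgeP z k i j → (1:ℝ)/2 ≤ M i j := by
    intro k i j he
    have h := hadj k
    rcases he with ⟨h1, h2⟩ | ⟨h1, h2⟩ <;> rw [h1, h2] at h <;>
      simp [graphAdj] at h <;> linarith
  have hEdgeUniq : ∀ k k' i j, EdgeP z k i j → EdgeP z k' i j → k = k' := by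
    intro k k' i j he he'
    rcases he with ⟨h1, h2⟩ | ⟨h1, h2⟩ <;> rcases he' with ⟨h1', h2'⟩ | ⟨h1', h2'⟩
    · exact hz (h1.trans h1'.symm)
    · -- z k = inl i = z (k'+1), z (k+1) = inr j = z k'
      have e1 : k = k' + 1 := hz (h1.trans h2'.symm)
      have e2 : k + 1 = k' := hz (h2.trans h1'.symm)
      exfalso; apply h2ne
      have : k = k + 1 + 1 := by rw [e2, ← e1]
      have : k + 2 = k := by rw [show k + 2 = k + 1 + 1 by ring, ← this]
      linear_combination this
    · have e1 : k + 1 = k' := hz (h2.trans h1'.symm)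
      have e2 : k = k' + 1 := hz (h1.trans h2'.symm)
      exfalso; apply h2ne
      have : k + 2 = k := by rw [show k + 2 = k + 1 + 1 by ring, e1, ← e2]
      linear_combination this
    · exact hz (h1.trans h1'.symm)
  have hEval : ∀ k i j, EdgeP z k i j → Emat z i j = sgnZ n k := by
    intro k i j he
    simp only [Emat]
    rw [Finset.sum_eq_single_of_mem k (Finset.mem_univ k)]
    · rw [if_pos he]
    · intro b _ hbk
      rw [if_neg]
      intro hb
      exact hbk (hEdgeUniq b k i j hb he)
  have hEval0 : ∀ i j, (∀ k, ¬ EdgeP z k i j) → Emat z i j = 0 := by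
    intro i j h
    simp only [Emat]
    exact Finset.sum_eq_zero fun k _ => if_neg (h k)
  have hEne0 : ∀ i j, Emat z i j ≠ 0 → ∃ k, EdgeP z k i j := by
    intro i j h
    by_contra hc
    simp only [not_exists] at hc
    exact h (hEval0 i j hc)
  have hEabs : ∀ i j, |Emat z i j| ≤ 1 := by
    intro i j
    by_cases h : ∃ k, EdgeP z k i j
    · obtain ⟨k, hk⟩ := h
      rw [hEval k i j hk]
      simp only [sgnZ]
      split <;> norm_num
    · simp only [not_exists] at h
      rw [hEval0 i j h]
      norm_num
  have hEhalf : ∀ i j, Emat z i j ≠ 0 → (1:ℝ)/2 ≤ M i j := by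
    intro i j h
    obtain ⟨k, hk⟩ := hEne0 i j h
    exact hEdgeHalf k i j hk
  -- inner row sums
  have hinnerRow : ∀ (k : ZMod n) (i : Fin d),
      (∑ j, if EdgeP z k i j then sgnZ n k else 0)
        = (if z k = Sum.inl i then sgnZ n k else 0)
          + (if z (k+1) = Sum.inl i then sgnZ n k else 0) := by
    intro k i
    have h := hflip k
    rcases hcases (z k) with ⟨i0, hk⟩ | ⟨j0, hk⟩ <;>
      rcases hcases (z (k+1)) with ⟨i1, hk1⟩ | ⟨j1, hk1⟩
    · rw [hk, hk1] at h; simp at h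
    · simp only [hk, hk1]
      by_cases hi : i0 = i
      · subst hi
        simp [EdgeP, hk, hk1, Finset.sum_ite_eq]
      · simp [EdgeP, hk, hk1, hi]
    · simp only [hk, hk1]
      by_cases hi : i1 = i
      · subst hi
        simp [EdgeP, hk, hk1, Finset.sum_ite_eq]
      · simp [EdgeP, hk, hk1, hi]
    · rw [hk, hk1] at h; simp at h
  have hinnerCol : ∀ (k : ZMod n) (j : Fin d),
      (∑ i, if EdgeP z k i j then sgnZ n k else 0)
        = (if z k = Sum.inr j then sgnZ n k else 0)
          + (if z (k+1) = Sum.inr j then sgnZ n k else 0) := by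
    intro k j
    have h := hflip k
    rcases hcases (z k) with ⟨i0, hk⟩ | ⟨j0, hk⟩ <;>
      rcases hcases (z (k+1)) with ⟨i1, hk1⟩ | ⟨j1, hk1⟩
    · rw [hk, hk1] at h; simp at h
    · simp only [hk, hk1]
      by_cases hj : j1 = j
      · subst hj
        simp [EdgeP, hk, hk1, Finset.sum_ite_eq]
      · simp [EdgeP, hk, hk1, hj]
    · simp only [hk, hk1]
      by_cases hj : j0 = j
      · subst hj
        simp [EdgeP, hk, hk1, Finset.sum_ite_eq]
      · simp [EdgeP, hk, hk1, hj]
    · rw [hk, hk1] at h; simp at h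
  have hsub1 : ∀ k : ZMod n, sgnZ n (k - 1) = - sgnZ n k := by
    intro k
    have h := hsgnstep (k - 1)
    have e : (k - 1) + 1 = k := by ring
    rw [e] at h
    linarith
  have hErow : ∀ i, ∑ j, Emat z i j = 0 := by
    intro i
    have hswap : ∑ j, Emat z i j
        = ∑ k : ZMod n, ∑ j, (if EdgeP z k i j then sgnZ n k else 0) := by
      simp only [Emat]; rw [Finset.sum_comm]
    rw [hswap, Finset.sum_congr rfl (fun k _ => hinnerRow k i), Finset.sum_add_distrib]
    have hre : (∑ k : ZMod n, if z (k+1) = Sum.inl i then sgnZ n k else 0)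
        = ∑ k : ZMod n, if z k = Sum.inl i then sgnZ n (k - 1) else 0 := by
      apply Fintype.sum_equiv (Equiv.addRight (1 : ZMod n))
      intro k
      simp only [Equiv.coe_addRight, add_sub_cancel_right]
    rw [hre, ← Finset.sum_add_distrib]
    apply Finset.sum_eq_zero
    intro k _
    rw [hsub1 k]
    split <;> ring
  have hEcol : ∀ j, ∑ i, Emat z i j = 0 := by
    intro j
    have hswap : ∑ i, Emat z i j
        = ∑ k : ZMod n, ∑ i, (if EdgeP z k i j then sgnZ n k else 0) := by
      simp only [Emat]; rw [Finset.sum_comm]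
    rw [hswap, Finset.sum_congr rfl (fun k _ => hinnerCol k j), Finset.sum_add_distrib]
    have hre : (∑ k : ZMod n, if z (k+1) = Sum.inr j then sgnZ n k else 0)
        = ∑ k : ZMod n, if z k = Sum.inr j then sgnZ n (k - 1) else 0 := by
      apply Fintype.sum_equiv (Equiv.addRight (1 : ZMod n))
      intro k
      simp only [Equiv.coe_addRight, add_sub_cancel_right]
    rw [hre, ← Finset.sum_add_distrib]
    apply Finset.sum_eq_zero
    intro k _
    rw [hsub1 k]
    split <;> ring
  -- the perturbation
  have hbd : ∀ i j, |(Emat z i j + Emat z (φ i) (ψ j)) / 16| ≤ M i j := by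
    intro i j
    have e1 := hEabs i j
    have e2 := hEabs (φ i) (ψ j)
    have habs : |(Emat z i j + Emat z (φ i) (ψ j)) / 16| ≤ 1/8 := by
      rw [abs_div, abs_of_pos (by norm_num : (0:ℝ) < 16)]
      have := abs_add_le (Emat z i j) (Emat z (φ i) (ψ j))
      linarith
    by_cases h1 : Emat z i j = 0
    · by_cases h2 : Emat z (φ i) (ψ j) = 0
      · rw [h1, h2]
        simpa using hnn i j
      · have := hEhalf (φ i) (ψ j) h2
        rw [hInv i j] at this
        linarith
    · have := hEhalf i j h1
      linarith
  have hmem : ∀ ε : ℝ, ε = 1 ∨ ε = -1 →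
      (fun i j => M i j + ε * ((Emat z i j + Emat z (φ i) (ψ j)) / 16)) ∈ invBirkhoff d φ ψ := by
    intro ε hε
    have hεabs : ∀ x : ℝ, |ε * x| = |x| := by
      intro x
      rcases hε with h | h <;> rw [h] <;> simp
    constructor
    · refine mem_doublyStochastic_iff_sum.mpr ?_
      beta_reduce
      refine ⟨fun i j => ?_, fun i => ?_, fun j => ?_⟩
      · have h1 := hbd i j
        have h2' : |ε * ((Emat z i j + Emat z (φ i) (ψ j)) / 16)| ≤ M i j := by
          rw [hεabs]; exact h1
        have h2 := abs_le.mp h2'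
        linarith [h2.1]
      · have hsum : ∑ j, Emat z (φ i) (ψ j) = 0 := by
          rw [Equiv.sum_comp ψ (fun j => Emat z (φ i) j)]
          exact hErow (φ i)
        rw [Finset.sum_add_distrib, hrow i, ← Finset.mul_sum]
        have : ∑ j, (Emat z i j + Emat z (φ i) (ψ j)) / 16
            = (∑ j, (Emat z i j + Emat z (φ i) (ψ j))) / 16 := by
          rw [Finset.sum_div]
        rw [this, Finset.sum_add_distrib, hErow i, hsum]
        norm_num
      · have hsum : ∑ i, Emat z (φ i) (ψ j) = 0 := by
          rw [Equiv.sum_comp φ (fun i => Emat z i (ψ j))]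
          exact hEcol (ψ j)
        rw [Finset.sum_add_distrib, hcol j, ← Finset.mul_sum]
        have : ∑ i, (Emat z i j + Emat z (φ i) (ψ j)) / 16
            = (∑ i, (Emat z i j + Emat z (φ i) (ψ j))) / 16 := by
          rw [Finset.sum_div]
        rw [this, Finset.sum_add_distrib, hEcol j, hsum]
        norm_num
    · funext i j
      simp only
      rw [hInv i j, hφ2 i, hψ2 j]
      ring
  have hA := hmem 1 (Or.inl rfl)
  have hB := hmem (-1) (Or.inr rfl)
  have hseg : M ∈ openSegment ℝ
      (fun i j => M i j + 1 * ((Emat z i j + Emat z (φ i) (ψ j)) / 16))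
      (fun i j => M i j + (-1) * ((Emat z i j + Emat z (φ i) (ψ j)) / 16)) := by
    refine ⟨1/2, 1/2, by norm_num, by norm_num, by norm_num, ?_⟩
    funext i j
    show (1:ℝ)/2 * _ + (1:ℝ)/2 * _ = M i j
    ring
  have hAeq := hExt hA hB hseg
  have hAnti : ∀ i j, Emat z (φ i) (ψ j) = - Emat z i j := by
    intro i j
    have h := congrFun (congrFun hAeq i) j
    beta_reduce at h
    linarith [h]
  -- the involution maps the cycle to itself
  have hι : ∀ u : Fin d ⊕ Fin d, Sum.map φ ψ (Sum.map φ ψ u) = u := by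
    intro u; rcases u with a | b <;> simp [hφ2, hψ2]
  have hιinj : Function.Injective (Sum.map (⇑φ) (⇑ψ) : Fin d ⊕ Fin d → Fin d ⊕ Fin d) := by
    intro a b hab
    have h := congrArg (Sum.map (⇑φ) (⇑ψ)) hab
    rwa [hι, hι] at h
  have hmap : ∀ k, ∃ m, z m = Sum.map φ ψ (z k) := by
    intro k
    obtain ⟨i, j, he⟩ := hEdgeEx k
    have h1 : Emat z i j = sgnZ n k := hEval k i j he
    have h2 : Emat z (φ i) (ψ j) ≠ 0 := by
      rw [hAnti, h1]; simpa using hsgnne k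
    obtain ⟨m, hm⟩ := hEne0 _ _ h2
    rcases he with ⟨ha, hb⟩ | ⟨ha, hb⟩
    · rw [ha]
      rcases hm with ⟨hc, hd⟩ | ⟨hc, hd⟩
      · exact ⟨m, by rw [hc]; rfl⟩
      · exact ⟨m + 1, by rw [hd]; rfl⟩
    · rw [ha]
      rcases hm with ⟨hc, hd⟩ | ⟨hc, hd⟩
      · exact ⟨m + 1, by rw [hd]; rfl⟩
      · exact ⟨m, by rw [hc]; rfl⟩
  choose f hf using hmap
  -- step structure of f
  have hstep : ∀ k, (f (k+1) = f k + 1 ∧ sgnZ n (f k) = -sgnZ n k)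
      ∨ (f (k+1) = f k - 1 ∧ sgnZ n (f k) = sgnZ n k) := by
    intro k
    obtain ⟨i, j, he⟩ := hEdgeEx k
    have h1 : Emat z i j = sgnZ n k := hEval k i j he
    have h2 : Emat z (φ i) (ψ j) = - sgnZ n k := by rw [hAnti, h1]
    have h2ne' : Emat z (φ i) (ψ j) ≠ 0 := by rw [h2]; simpa using hsgnne k
    obtain ⟨m, hm⟩ := hEne0 _ _ h2ne'
    have hsgnm : sgnZ n m = - sgnZ n k := by rw [← h2, hEval m _ _ hm]
    rcases he with ⟨ha, hb⟩ | ⟨ha, hb⟩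
    · have hfk : z (f k) = Sum.inl (φ i) := by rw [hf, ha]; rfl
      have hfk1 : z (f (k+1)) = Sum.inr (ψ j) := by rw [hf, hb]; rfl
      rcases hm with ⟨hc, hd⟩ | ⟨hc, hd⟩
      · left
        have e1 : f k = m := hz (hfk.trans hc.symm)
        have e2 : f (k+1) = m + 1 := hz (hfk1.trans hd.symm)
        exact ⟨by rw [e1, e2], by rw [e1, hsgnm]⟩
      · right
        have e1 : f k = m + 1 := hz (hfk.trans hd.symm)
        have e2 : f (k+1) = m := hz (hfk1.trans hc.symm)
        refine ⟨by rw [e1, e2]; ring, ?_⟩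
        rw [e1, hsgnstep m, hsgnm]; ring
    · have hfk : z (f k) = Sum.inr (ψ j) := by rw [hf, ha]; rfl
      have hfk1 : z (f (k+1)) = Sum.inl (φ i) := by rw [hf, hb]; rfl
      rcases hm with ⟨hc, hd⟩ | ⟨hc, hd⟩
      · right
        have e1 : f k = m + 1 := hz (hfk.trans hd.symm)
        have e2 : f (k+1) = m := hz (hfk1.trans hc.symm)
        refine ⟨by rw [e1, e2]; ring, ?_⟩
        rw [e1, hsgnstep m, hsgnm]; ring
      · left
        have e1 : f k = m := hz (hfk.trans hc.symm)
        have e2 : f (k+1) = m + 1 := hz (hfk1.trans hd.symm)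
        exact ⟨by rw [e1, e2], by rw [e1, hsgnm]⟩
  -- direction is constant
  have hconsec : ∀ k, f (k+1) = f k + 1 → f (k+1+1) = f (k+1) + 1 := by
    intro k hk
    rcases hstep (k+1) with ⟨h1, _⟩ | ⟨h1, _⟩
    · exact h1
    · exfalso
      have hh : f (k+1+1) = f k := by rw [h1, hk]; ring
      have heq : z (k+1+1) = z k := by
        apply hιinj
        rw [← hf, ← hf, hh]
      have hkk := hz heq
      apply h2ne
      linear_combination hkk
  have hconsec' : ∀ k, f (k+1) = f k - 1 → f (k+1+1) = f (k+1) - 1 := by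
    intro k hk
    rcases hstep (k+1) with ⟨h1, _⟩ | ⟨h1, _⟩
    · exfalso
      have hh : f (k+1+1) = f k := by rw [h1, hk]; ring
      have heq : z (k+1+1) = z k := by
        apply hιinj
        rw [← hf, ← hf, hh]
      have hkk := hz heq
      apply h2ne
      linear_combination hkk
    · exact h1
  have hnotU : ∀ k, ¬ (f (k+1) = f k + 1) → f (k+1) = f k - 1 := by
    intro k hk
    rcases hstep k with ⟨h1, _⟩ | ⟨h1, _⟩
    · exact absurd h1 hk
    · exact h1
  have hUstep : ∀ k : ZMod n, (f (k+1+1) = f (k+1) + 1) = (f (k+1) = f k + 1) := by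
    intro k
    apply propext
    constructor
    · intro h'
      by_contra hUk
      have hd := hconsec' k (hnotU k hUk)
      have hcontr := h'.symm.trans hd
      apply h2ne
      linear_combination hcontr
    · exact hconsec k
  have hUall : ∀ k : ZMod n, (f (k+1) = f k + 1) = (f (0+1) = f 0 + 1) :=
    constIter (fun k => f (k+1) = f k + 1) hUstep
  -- side-preservation and parity bridge
  have hside : ∀ k, (z (f k)).isLeft = (z k).isLeft := by
    intro k
    rw [hf]
    rcases z k with a | b <;> rfl
  have hgstep : ∀ k, xor (parB (k+1)) ((z (k+1)).isLeft) = xor (parB k) ((z k).isLeft) := by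
    intro k
    rw [hparstep, hflip]
    cases parB k <;> cases (z k).isLeft <;> rfl
  have hgconst := constIter (fun k => xor (parB k) ((z k).isLeft)) hgstep
  have hparside : ∀ a b : ZMod n, parB a = parB b ↔ (z a).isLeft = (z b).isLeft := by
    intro a b
    exact boolAux _ _ _ _ ((hgconst a).trans (hgconst b).symm)
  by_cases hU0 : f (0+1 : ZMod n) = f 0 + 1
  · -- translation case: impossible
    exfalso
    have hup : ∀ k, f (k+1) = f k + 1 := by
      intro k
      rw [hUall k]
      exact hU0
    have h1 : sgnZ n (f 0) = - sgnZ n 0 := by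
      rcases hstep 0 with ⟨_, h⟩ | ⟨hh1, _⟩
      · exact h
      · exfalso
        have := (hup 0).symm.trans hh1
        apply h2ne
        linear_combination this
    have h2 : parB (f 0) ≠ parB 0 := by
      intro hp
      have hs := (hsgnpar (f 0) 0).mpr hp
      rw [h1] at hs
      exact hsgnne 0 (by linarith)
    exact h2 ((hparside (f 0) 0).mpr (hside 0))
  · -- reflection case
    have hdn : ∀ k, f (k+1) = f k - 1 := by
      intro k
      apply hnotU
      rw [hUall k]
      exact hU0
    set c := f 0 with hc
    have hfk : ∀ k, f k = c - k := by
      have key : ∀ m : ℕ, f ((m : ℕ) : ZMod n) = c - ((m : ℕ) : ZMod n) := by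
        intro m
        induction m with
        | zero => simp [hc]
        | succ m ih =>
          have h1 : ((m+1:ℕ) : ZMod n) = ((m : ℕ) : ZMod n) + 1 := by push_cast; ring
          rw [h1, hdn, ih]
          ring
      intro k
      conv_lhs => rw [← ZMod.natCast_zmod_val k]
      rw [key k.val, ZMod.natCast_zmod_val]
    have hfix : ∀ k, Sum.map φ ψ (z k) = z k ↔ k + k = c := by
      intro k
      constructor
      · intro h
        have hk : f k = k := hz (by rw [hf, h])
        rw [hfk k] at hk
        linear_combination -hk
      · intro h
        have hk : f k = k := by
          rw [hfk k]
          linear_combination -h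
        rw [← hf k, hk]
    have hcpar : parB c = parB 0 := by
      apply (hparside c 0).mpr
      rw [hc]
      exact hside 0
    have hc2 : c.val % 2 = 0 := by
      simp only [hparB, ZMod.val_zero] at hcpar
      simp at hcpar
      omega
    set k₁ : ZMod n := ((c.val / 2 : ℕ) : ZMod n) with hk₁
    set half : ZMod n := ((n / 2 : ℕ) : ZMod n) with hhalf
    set k₂ : ZMod n := k₁ + half with hk₂
    have hk1c : k₁ + k₁ = c := by
      rw [hk₁, ← Nat.cast_add]
      have he : c.val / 2 + c.val / 2 = c.val := by omega
      rw [he, ZMod.natCast_zmod_val]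
    have hhalf2 : half + half = 0 := by
      rw [hhalf, ← Nat.cast_add]
      have he : n / 2 + n / 2 = n := by omega
      rw [he, ZMod.natCast_self]
    have hk2c : k₂ + k₂ = c := by
      have he : k₂ + k₂ = (k₁ + k₁) + (half + half) := by rw [hk₂]; ring
      rw [he, hk1c, hhalf2, add_zero]
    have hhalfne : half ≠ 0 := by
      intro h
      rw [hhalf, ZMod.natCast_eq_zero_iff] at h
      have := Nat.le_of_dvd (by omega) h
      omega
    have hne12 : k₁ ≠ k₂ := by
      intro h
      apply hhalfne
      have h2 : k₁ + half = k₁ + 0 := by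
        rw [add_zero, ← hk₂]
        exact h.symm
      exact add_left_cancel h2
    have hdouble : ∀ a : ZMod n, a + a = 0 → a = 0 ∨ a = half := by
      intro a ha
      have hcast : ((a.val + a.val : ℕ) : ZMod n) = 0 := by
        push_cast
        rw [ZMod.natCast_zmod_val]
        exact ha
      rw [ZMod.natCast_eq_zero_iff] at hcast
      have hlt := ZMod.val_lt a
      obtain ⟨t, ht⟩ := hcast
      have ht2 : t = 0 ∨ t = 1 := by
        rcases Nat.lt_or_ge t 2 with h | h
        · omega
        · exfalso
          have := Nat.mul_le_mul_left n h
          omega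
      rcases ht2 with rfl | rfl
      · left
        have hv : a.val = 0 := by omega
        rw [← ZMod.natCast_zmod_val a, hv]
        exact Nat.cast_zero
      · right
        have hv : a.val = n / 2 := by omega
        rw [← ZMod.natCast_zmod_val a, hv, hhalf]
    have huniq : ∀ k, k + k = c → k = k₁ ∨ k = k₂ := by
      intro k hk
      have hsub : (k - k₁) + (k - k₁) = 0 := by linear_combination hk - hk1c
      rcases hdouble _ hsub with h | h
      · left
        exact sub_eq_zero.mp h
      · right
        rw [hk₂]
        linear_combination h
    have hpar12 : parB k₂ = xor (decide ((n/2) % 2 = 1)) (parB k₁) :=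
      flipIter parB hparstep k₁ (n/2)
    refine ⟨k₁, k₂, hne12, (hfix k₁).mpr hk1c, (hfix k₂).mpr hk2c,
      fun k h => huniq k ((hfix k).mp h), ?_, ?_⟩
    · intro h
      have hp : parB k₁ = parB k₂ := (hparside k₁ k₂).mpr h
      rw [hpar12] at hp
      have hd : ¬ ((n/2) % 2 = 1) := by
        intro hodd
        rw [(by simp [hodd] : decide ((n/2) % 2 = 1) = true)] at hp
        simp at hp
      omega
    · intro h
      have hp : parB k₁ ≠ parB k₂ := fun hh => h ((hparside k₁ k₂).mp hh)
      have hd : (n/2) % 2 = 1 := by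
        rcases Nat.mod_two_eq_zero_or_one (n/2) with he | he
        · exfalso
          apply hp
          rw [hpar12, (by simp [he] : decide ((n/2) % 2 = 1) = false)]
          simp
        · exact he
      omega
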